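/- Let ∇, ∇', ∇'' be three connections on a transitive Lie algebroid A with invariant pairing on g, and let φ(∇,∇') denote the canonical isomorphism Â_{∇', H+P(∇,∇')} → Â_{∇,H} of Courant extensions given by α + a + ξ ↦ (α − ⟨a, A(•)⟩ − (1/2)⟨A(ξ), A(•)⟩) + (a + A(ξ)) + ξ with A = ∇' − ∇. Then the composite φ(∇,∇') ∘ φ(∇',∇'') ∘ φ(∇'',∇) equals exp(−(1/2)⟨A ∧ A'⟩), where A = ∇' − ∇, A' = ∇'' − ∇', and exp(B)(q) = q + ι_{π(q)}B. -/

import Mathlib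

/-!
The maps `φ` compose additively in the difference of connections up to a `B`-field:
`φ(A₁) ∘ φ(A₂) = exp(-(1/2)⟨A₁ ∧ A₂⟩) ∘ φ(A₁ + A₂)`, and `φ(A)` commutes with every `exp(B)`.
Applying this twice to the triple composite leaves
`exp(-(1/2)⟨A' ∧ -(A + A')⟩) ∘ exp(-(1/2)⟨A ∧ -A⟩)`;
by symmetry of the pairing `⟨A ∧ -A⟩ = 0` and `⟨A' ∧ -(A + A')⟩ = ⟨A ∧ A'⟩`.
-/

noncomputable section

/-- The "vector fields" on the algebraic model of the space with function ring `O`. -/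
abbrev Vec (O : Type*) [CommRing O] [Algebra ℂ O] := Derivation ℂ O O

/-- Algebraic model of a Courant `O`-algebroid: an `O`-module `Q` equipped with a
Leibniz bracket, an `O`-linear anchor into vector fields, a symmetric `O`-bilinear
pairing, and a derivation `∂ : O → Q`, subject to the Courant axioms. -/
structure CourantAlgebroid (O : Type*) [CommRing O] [Algebra ℂ O]
    (Q : Type*) [AddCommGroup Q] [Module O Q] where
  bracket : Q → Q → Q
  bracket_add_left : ∀ q₁ q₂ q₃, bracket (q₁ + q₂) q₃ = bracket q₁ q₃ + bracket q₂ q₃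
  bracket_add_right : ∀ q₁ q₂ q₃, bracket q₁ (q₂ + q₃) = bracket q₁ q₂ + bracket q₁ q₃
  anchor : Q →ₗ[O] Vec O
  pair : Q →ₗ[O] Q →ₗ[O] O
  pair_symm : ∀ q₁ q₂, pair q₁ q₂ = pair q₂ q₁
  par : O → Q
  par_add : ∀ f g, par (f + g) = par f + par g
  par_mul : ∀ f g, par (f * g) = f • par g + g • par f
  anchor_par : ∀ f, anchor (par f) = 0
  anchor_bracket : ∀ q₁ q₂, anchor (bracket q₁ q₂) = ⁅anchor q₁, anchor q₂⁆
  jacobi : ∀ q q₁ q₂, bracket q (bracket q₁ q₂)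
      = bracket (bracket q q₁) q₂ + bracket q₁ (bracket q q₂)
  leibniz : ∀ (q₁ q₂ : Q) (f : O), bracket q₁ (f • q₂) = f • bracket q₁ q₂ + anchor q₁ f • q₂
  invar : ∀ q q₁ q₂, pair (bracket q q₁) q₂ + pair q₁ (bracket q q₂)
      = anchor q (pair q₁ q₂)
  bracket_par : ∀ (q : Q) (f : O), bracket q (par f) = par (anchor q f)
  pair_par : ∀ (q : Q) (f : O), pair q (par f) = anchor q f
  symm_bracket : ∀ q₁ q₂, bracket q₁ q₂ + bracket q₂ q₁ = par (pair q₁ q₂)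

/-- `Ω_Q`: the `O`-submodule of `Q` generated by the image of the derivation `∂`. -/
def CourantAlgebroid.Omega {O : Type*} [CommRing O] [Algebra ℂ O]
    {Q : Type*} [AddCommGroup Q] [Module O Q] (C : CourantAlgebroid O Q) : Submodule O Q :=
  Submodule.span O (Set.range C.par)

/-- Algebraic model of a Lie `O`-algebroid. -/
structure LieAlgebroid (O : Type*) [CommRing O] [Algebra ℂ O]
    (A : Type*) [AddCommGroup A] [Module O A] where
  bracket : A → A → A
  bracket_add_left : ∀ a b c, bracket (a + b) c = bracket a c + bracket b c
  bracket_add_right : ∀ a b c, bracket a (b + c) = bracket a b + bracket a c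
  anchor : A →ₗ[O] Vec O
  skew : ∀ a b, bracket a b = - bracket b a
  jacobi : ∀ a b c, bracket a (bracket b c) = bracket (bracket a b) c + bracket b (bracket a c)
  anchor_bracket : ∀ a b, anchor (bracket a b) = ⁅anchor a, anchor b⁆
  leibniz : ∀ (a b : A) (f : O), bracket a (f • b) = f • bracket a b + anchor a f • b

section
variable {O : Type*} [CommRing O] [Algebra ℂ O]
variable {A : Type*} [AddCommGroup A] [Module O A]

/-- The canonical isomorphism `φ(∇,∇') : Â_{∇',H+P(∇,∇')} → Â_{∇,H}` of Courant
extensions determined by a difference of connections `Am = ∇' - ∇`: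
`α + a + ξ ↦ (α - ⟨a, Am(•)⟩ - (1/2)⟨Am(ξ), Am(•)⟩) + (a + Am(ξ)) + ξ`. -/
def phiConn (P : A →ₗ[O] A →ₗ[O] O) (Am : Vec O → A)
    (x : (Vec O → O) × A × Vec O) : (Vec O → O) × A × Vec O :=
  ( fun η => x.1 η - P x.2.1 (Am η)
      - algebraMap ℂ O (1/2) * P (Am x.2.2) (Am η),
    x.2.1 + Am x.2.2,
    x.2.2 )

end

section
variable {O : Type*} [CommRing O] [Algebra ℂ O] {A : Type*} [AddCommGroup A] [Module O A]

/-- The paper's `⟨A₁ ∧ A₂⟩`. -/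
def pairWedge (P : A →ₗ[O] A →ₗ[O] O) (A₁ A₂ : Vec O → A) : Vec O → Vec O → O :=
  fun ξ η => P (A₁ ξ) (A₂ η) - P (A₁ η) (A₂ ξ)

/-- `exp(B)(q) = q + ι_{π(q)} B`, where `ι_ξ B = B(•, ξ)`. -/
def expTwoForm (B : Vec O → Vec O → O) (x : (Vec O → O) × A × Vec O) :
    (Vec O → O) × A × Vec O :=
  (fun η => x.1 η + B η x.2.2, x.2.1, x.2.2)

omit [AddCommGroup A] [Module O A] in
theorem expTwoForm_zero (x : (Vec O → O) × A × Vec O) : expTwoForm 0 x = x := by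
  simp [expTwoForm]

theorem phiConn_zero (P : A →ₗ[O] A →ₗ[O] O) (x : (Vec O → O) × A × Vec O) :
    phiConn P 0 x = x := by
  simp [phiConn]

theorem phiConn_expTwoForm (P : A →ₗ[O] A →ₗ[O] O) (Am : Vec O → A)
    (B : Vec O → Vec O → O) (x : (Vec O → O) × A × Vec O) :
    phiConn P Am (expTwoForm B x) = expTwoForm B (phiConn P Am x) := by
  simp only [phiConn, expTwoForm, Prod.mk.injEq, and_true]
  funext η
  ring

theorem pairWedge_neg_right (P : A →ₗ[O] A →ₗ[O] O) (A₁ A₂ : Vec O → A) :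
    pairWedge P A₁ (-A₂) = -pairWedge P A₁ A₂ := by
  funext ξ η
  simp only [pairWedge, Pi.neg_apply, map_neg]
  ring

theorem pairWedge_add_right (P : A →ₗ[O] A →ₗ[O] O) (A₁ A₂ A₃ : Vec O → A) :
    pairWedge P A₁ (A₂ + A₃) = pairWedge P A₁ A₂ + pairWedge P A₁ A₃ := by
  funext ξ η
  simp only [pairWedge, Pi.add_apply, map_add]
  ring

variable {P : A →ₗ[O] A →ₗ[O] O} (P_symm : ∀ a b, P a b = P b a)
include P_symm

theorem pairWedge_comm (A₁ A₂ : Vec O → A) : pairWedge P A₂ A₁ = -pairWedge P A₁ A₂ := by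
  funext ξ η
  simp only [pairWedge, Pi.neg_apply, P_symm (A₂ _)]
  ring

theorem pairWedge_self (A₁ : Vec O → A) : pairWedge P A₁ A₁ = 0 := by
  funext ξ η
  simp only [pairWedge, P_symm (A₁ ξ), sub_self, Pi.zero_apply]

theorem pairWedge_neg_add_right (A₁ A₂ : Vec O → A) :
    pairWedge P A₂ (-(A₁ + A₂)) = pairWedge P A₁ A₂ := by
  rw [pairWedge_neg_right, pairWedge_add_right, pairWedge_comm P_symm, pairWedge_self P_symm,
    add_zero, neg_neg]

theorem phiConn_phiConn (A₁ A₂ : Vec O → A) (x : (Vec O → O) × A × Vec O) :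
    phiConn P A₁ (phiConn P A₂ x)
      = expTwoForm (algebraMap ℂ O (-(1/2)) • pairWedge P A₁ A₂) (phiConn P (A₁ + A₂) x) := by
  have two_mul_half : 2 * algebraMap ℂ O (1/2) = 1 := by
    rw [← map_ofNat (algebraMap ℂ O) 2, ← map_mul]
    norm_num
  refine Prod.ext (funext fun η => ?_) (Prod.ext ?_ rfl)
  · simp only [phiConn, expTwoForm, pairWedge, Pi.add_apply, Pi.smul_apply, smul_eq_mul,
      map_add, map_neg, LinearMap.add_apply]
    rw [P_symm (A₂ x.2.2) (A₁ η)]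
    linear_combination P (A₁ η) (A₂ x.2.2) * two_mul_half
  · simp only [phiConn, expTwoForm, Pi.add_apply]
    abel

end

theorem triple_composition_is_exp_general
    (O : Type*) [CommRing O] [Algebra ℂ O]
    (A : Type*) [AddCommGroup A] [Module O A]
    (P : A →ₗ[O] A →ₗ[O] O)
    (P_symm : ∀ a b, P a b = P b a)
    (Am Am' : Vec O → A) :
    ∀ x : (Vec O → O) × A × Vec O,
      phiConn P Am (phiConn P Am' (phiConn P (fun ξ => -(Am ξ + Am' ξ)) x))
      = ( fun η => x.1 η
            + algebraMap ℂ O (-(1/2)) * (P (Am η) (Am' x.2.2) - P (Am x.2.2) (Am' η)),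
          x.2.1, x.2.2 ) := by
  intro x
  have sum_eq_neg : Am' + -(Am + Am') = -Am := by abel
  change phiConn P Am (phiConn P Am' (phiConn P (-(Am + Am')) x)) = _
  rw [phiConn_phiConn P_symm Am', sum_eq_neg, phiConn_expTwoForm, phiConn_phiConn P_symm Am,
    add_neg_cancel, phiConn_zero, pairWedge_neg_add_right P_symm, pairWedge_neg_right,
    pairWedge_self P_symm, neg_zero, smul_zero, expTwoForm_zero]
  rfl

/-- for three connections `∇, ∇', ∇''` on a transitive Lie
algebroid with invariant pairing `P` on `g`, with `Am = ∇' - ∇` and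
`Am' = ∇'' - ∇'` (so `∇ - ∇'' = -(Am + Am')`), the composite
`φ(∇,∇') ∘ φ(∇',∇'') ∘ φ(∇'',∇)` equals `exp(-(1/2)⟨Am ∧ Am'⟩)`, i.e. it adds
to the one-form component the contraction of `-(1/2)⟨Am ∧ Am'⟩` with the
`T`-component, where `⟨Am ∧ Am'⟩(ξ,η) = ⟨Am ξ, Am' η⟩ - ⟨Am η, Am' ξ⟩`. -/
theorem triple_composition_is_exp
    (O : Type*) [CommRing O] [Algebra ℂ O]
    (A : Type*) [AddCommGroup A] [Module O A]
    (L : LieAlgebroid O A)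
    (P : A →ₗ[O] A →ₗ[O] O)
    (P_symm : ∀ a b, P a b = P b a)
    (Am Am' : Vec O → A)
    (hAm_g : ∀ ξ, L.anchor (Am ξ) = 0) (hAm'_g : ∀ ξ, L.anchor (Am' ξ) = 0) :
    ∀ x : (Vec O → O) × A × Vec O,
      phiConn P Am (phiConn P Am' (phiConn P (fun ξ => -(Am ξ + Am' ξ)) x))
      = ( fun η => x.1 η
            + algebraMap ℂ O (-(1/2)) * (P (Am η) (Am' x.2.2) - P (Am x.2.2) (Am' η)),
          x.2.1, x.2.2 ) :=
  triple_composition_is_exp_general O A P P_symm Am Am'
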